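/- Let 1 ≤ p < q < ∞ and d ≥ 1. Define f(x) = |x|^{-d/q} on ℝ^d \ {0}. Then the Morrey norm ‖f‖_{M^p_q} = sup_{a ∈ ℝ^d, R > 0} |B(a,R)|^{1/q−1/p} (∫_{B(a,R)} |f|^p)^{1/p} is finite and equals (C_d/d)^{1/q}(1 − p/q)^{−1/p}, where C_d is the surface measure of the unit sphere in ℝ^d. -/

import Mathlib

open MeasureTheory Metric ENNReal

/-- The small Morrey norm: sup over centers `a` and radii `R ∈ (0,1)` of
`|B(a,R)|^(1/q-1/p) (∫_{B(a,R)} |f|^p)^(1/p)`, valued in `ℝ≥0∞`. -/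
noncomputable def smallMorreyNorm (d : ℕ) (p q : ℝ)
    (f : EuclideanSpace ℝ (Fin d) → ℝ) : ℝ≥0∞ :=
  ⨆ (a : EuclideanSpace ℝ (Fin d)) (R : ℝ) (_ : 0 < R) (_ : R < 1),
    volume (ball a R) ^ (1 / q - 1 / p) *
      (∫⁻ y in ball a R, ENNReal.ofReal (|f y| ^ p)) ^ (1 / p)

/-- The (classical) Morrey norm: sup over all centers `a` and radii `R > 0`. -/
noncomputable def morreyNorm (d : ℕ) (p q : ℝ)
    (f : EuclideanSpace ℝ (Fin d) → ℝ) : ℝ≥0∞ :=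
  ⨆ (a : EuclideanSpace ℝ (Fin d)) (R : ℝ) (_ : 0 < R),
    volume (ball a R) ^ (1 / q - 1 / p) *
      (∫⁻ y in ball a R, ENNReal.ofReal (|f y| ^ p)) ^ (1 / p)

/-!
The function `|f|^p = |x|^{-dp/q}` is radially decreasing, so among balls of radius `R` the
centred one carries the largest integral: `B(a,R) \ B(0,R)` and `B(0,R) \ B(a,R)` have equal
measure, and `|f|^p` is at most `R^{-dp/q}` on the first and at least `R^{-dp/q}` on the second.
On centred balls, polar coordinates give
`∫_{B(0,R)} |x|^{-dp/q} = |B(0,1)| R^{d(1-p/q)} / (1-p/q)`, and the exponents of `R` in the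
Morrey quotient cancel, leaving the constant `|B(0,1)|^{1/q} (1-p/q)^{-1/p}` for every `R`.
-/

open Set

theorem setLIntegral_le_of_measure_eq {α : Type*} [MeasurableSpace α] {μ : Measure α}
    {s t : Set α} {f : α → ℝ≥0∞} {c : ℝ≥0∞} (hs : MeasurableSet s) (ht : MeasurableSet t)
    (hμ : μ s = μ t) (hfin : μ s ≠ ∞) (hf_s : ∀ x ∈ s \ t, f x ≤ c)
    (hf_t : ∀ᵐ x ∂μ, x ∈ t \ s → c ≤ f x) :
    ∫⁻ x in s, f x ∂μ ≤ ∫⁻ x in t, f x ∂μ := by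
  have hdiff : μ (s \ t) = μ (t \ s) :=
    measure_sdiff_symm hs.nullMeasurableSet ht.nullMeasurableSet hμ
      (measure_ne_top_of_subset inter_subset_left hfin)
  have hsdiff : ∫⁻ x in s \ t, f x ∂μ ≤ ∫⁻ x in t \ s, f x ∂μ :=
    calc ∫⁻ x in s \ t, f x ∂μ ≤ ∫⁻ _ in s \ t, c ∂μ := setLIntegral_mono' (hs.diff ht) hf_s
      _ = ∫⁻ _ in t \ s, c ∂μ := by rw [setLIntegral_const, setLIntegral_const, hdiff]
      _ ≤ ∫⁻ x in t \ s, f x ∂μ := setLIntegral_mono_ae' (ht.diff hs) hf_t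
  rw [← lintegral_inter_add_sdiff f s ht, ← lintegral_inter_add_sdiff f t hs, inter_comm]
  gcongr

theorem integral_Ioi_pow_mul_indicator_rpow {n : ℕ} {t R : ℝ} (hn : 0 < n) (ht : -n < t)
    (hR : 0 ≤ R) :
    ∫ y in Ioi (0 : ℝ), y ^ (n - 1) • (Iio R).indicator (fun r ↦ r ^ t) y =
      R ^ (n + t) / (n + t) := by
  calc ∫ y in Ioi (0 : ℝ), y ^ (n - 1) • (Iio R).indicator (fun r ↦ r ^ t) y
      = ∫ y in Ioo 0 R, y ^ ((n : ℝ) - 1 + t) := by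
        rw [← Ioi_inter_Iio, ← setIntegral_indicator measurableSet_Iio]
        refine setIntegral_congr_fun measurableSet_Ioi fun y (hy : 0 < y) ↦ ?_
        by_cases hyR : y < R
        · simp [hyR, ← Real.rpow_natCast, ← Real.rpow_add hy, Nat.cast_sub hn]
        · simp [hyR]
    _ = ∫ y in (0)..R, y ^ ((n : ℝ) - 1 + t) := by
        rw [intervalIntegral.integral_of_le hR, integral_Ioc_eq_integral_Ioo]
    _ = R ^ (n + t) / (n + t) := by
        rw [integral_rpow (Or.inl (by linarith)), Real.zero_rpow (by linarith)]
        ring_nf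

theorem antitoneOn_ofReal_rpow {t : ℝ} (ht : t ≤ 0) :
    AntitoneOn (fun r : ℝ ↦ ENNReal.ofReal (r ^ t)) (Ioi 0) := fun _ ha _ _ hab ↦
  ENNReal.ofReal_le_ofReal (Real.rpow_le_rpow_of_nonpos ha hab ht)

theorem abs_norm_rpow_rpow {E : Type*} [SeminormedAddCommGroup E] (x : E) (s p : ℝ) :
    |‖x‖ ^ s| ^ p = ‖x‖ ^ (s * p) := by
  rw [abs_of_nonneg (by positivity), Real.rpow_mul (norm_nonneg x)]

noncomputable def morreyQuotient {X : Type*} [PseudoMetricSpace X] [MeasurableSpace X]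
    (μ : Measure X) (p q : ℝ) (f : X → ℝ) (a : X) (R : ℝ) : ℝ≥0∞ :=
  μ (ball a R) ^ (1 / q - 1 / p) * (∫⁻ y in ball a R, ENNReal.ofReal (|f y| ^ p) ∂μ) ^ (1 / p)

theorem morreyNorm_eq_iSup_morreyQuotient (d : ℕ) (p q : ℝ)
    (f : EuclideanSpace ℝ (Fin d) → ℝ) :
    morreyNorm d p q f = ⨆ (a) (R : ℝ) (_ : 0 < R), morreyQuotient volume p q f a R :=
  rfl

section HaarMeasure

variable {E : Type*} [NormedAddCommGroup E] [NormedSpace ℝ E] [FiniteDimensional ℝ E]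
  [MeasurableSpace E] [BorelSpace E] (μ : Measure E) [μ.IsAddHaarMeasure] [Nontrivial E]

theorem setLIntegral_ball_le_ball_zero {φ : ℝ → ℝ≥0∞} (hφ : AntitoneOn φ (Ioi 0)) (a : E)
    {R : ℝ} (hR : 0 < R) :
    ∫⁻ x in ball a R, φ ‖x‖ ∂μ ≤ ∫⁻ x in ball 0 R, φ ‖x‖ ∂μ := by
  refine setLIntegral_le_of_measure_eq (c := φ R) measurableSet_ball measurableSet_ball
    (μ.addHaar_ball_center a R) measure_ball_lt_top.ne ?_ ?_
  · rintro x ⟨-, hx⟩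
    rw [mem_ball_zero_iff, not_lt] at hx
    exact hφ hR (hR.trans_le hx) hx
  · filter_upwards [measure_singleton (μ := μ) 0 |> compl_mem_ae_iff.2] with x hx0 hx
    exact hφ (norm_pos_iff.2 hx0) hR (mem_ball_zero_iff.1 hx.1).le

theorem morreyQuotient_norm_rpow_le_ball_zero {p q s : ℝ} (hp : 0 ≤ p) (hs : s ≤ 0) (a : E)
    {R : ℝ} (hR : 0 < R) :
    morreyQuotient μ p q (‖·‖ ^ s) a R ≤ morreyQuotient μ p q (‖·‖ ^ s) 0 R := by
  simp only [morreyQuotient, abs_norm_rpow_rpow, μ.addHaar_ball_center a R]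
  gcongr _ * ?_ ^ _
  exact setLIntegral_ball_le_ball_zero μ
    (antitoneOn_ofReal_rpow (mul_nonpos_of_nonpos_of_nonneg hs hp)) a hR

theorem lintegral_ball_zero_norm_rpow {t R : ℝ} (ht : -Module.finrank ℝ E < t) (hR : 0 ≤ R) :
    ∫⁻ x in ball (0 : E) R, ENNReal.ofReal (‖x‖ ^ t) ∂μ =
      ENNReal.ofReal (Module.finrank ℝ E * R ^ (Module.finrank ℝ E + t) /
        (Module.finrank ℝ E + t)) * μ (ball 0 1) := by
  set n := Module.finrank ℝ E
  have hint : IntegrableOn (fun x : E ↦ ‖x‖ ^ t) (ball 0 R) μ :=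
    integrableOn_ball_of_norm_le_rpow (C := 1) (α := -t) Module.finrank_pos (by linarith)
      (ae_of_all _ fun x ↦ by simp [abs_of_nonneg (Real.rpow_nonneg (norm_nonneg x) _)])
      (measurable_norm.pow_const _).aestronglyMeasurable
  have hball : ∫ x in ball (0 : E) R, ‖x‖ ^ t ∂μ =
      ∫ x, (Iio R).indicator (fun r ↦ r ^ t) ‖x‖ ∂μ := by
    rw [← integral_indicator measurableSet_ball]
    congr 1 with x
    by_cases hx : ‖x‖ < R <;> simp [hx]
  rw [← ofReal_integral_eq_lintegral_ofReal hint (ae_of_all _ fun x ↦ by positivity), hball,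
    integral_fun_norm_addHaar, integral_Ioi_pow_mul_indicator_rpow Module.finrank_pos ht hR,
    ← ofReal_measureReal measure_ball_lt_top.ne,
    ← ENNReal.ofReal_mul (div_nonneg (by positivity) (by linarith))]
  congr 1
  simp only [nsmul_eq_mul, smul_eq_mul, n]
  ring

theorem morreyQuotient_norm_rpow_ball_zero {p q R : ℝ} (hp : 0 < p) (hpq : p < q) (hR : 0 < R) :
    morreyQuotient μ p q (‖·‖ ^ (-(Module.finrank ℝ E : ℝ) / q)) 0 R =
      μ (ball 0 1) ^ (1 / q) * ENNReal.ofReal ((1 - p / q) ^ (-1 / p)) := by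
  set n := Module.finrank ℝ E
  set c := 1 - p / q with hc
  have hq : 0 < q := hp.trans hpq
  have hc0 : 0 < c := by rw [hc, sub_pos, div_lt_one hq]; exact hpq
  have hn : (0 : ℝ) < n := by exact_mod_cast Module.finrank_pos
  have hnc : (n : ℝ) + -n / q * p = n * c := by rw [hc]; ring
  have ht : -(n : ℝ) < -n / q * p := by nlinarith
  have hreal : ∀ X : ℝ, 0 < X → X ^ (1 / q - 1 / p) * (X ^ c / c) ^ (1 / p) = c ^ (-1 / p) := by
    intro X hX
    have hexp : 1 / q - 1 / p + c * (1 / p) = 0 := by rw [hc]; field_simp; ring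
    rw [Real.div_rpow (by positivity) hc0.le, ← Real.rpow_mul hX.le, mul_div_assoc',
      ← Real.rpow_add hX, hexp, Real.rpow_zero, neg_div, Real.rpow_neg hc0.le, one_div]
  have hint : (n : ℝ) * R ^ ((n : ℝ) + -n / q * p) / (n + -n / q * p) = (R ^ n) ^ c / c := by
    rw [hnc, ← Real.rpow_natCast, ← Real.rpow_mul hR.le]
    field_simp
  have hV0 : μ (ball (0 : E) 1) ≠ 0 := (measure_ball_pos μ 0 one_pos).ne'
  have hVt : μ (ball (0 : E) 1) ≠ ∞ := measure_ball_lt_top.ne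
  simp only [morreyQuotient, abs_norm_rpow_rpow]
  rw [μ.addHaar_ball_of_pos _ hR, lintegral_ball_zero_norm_rpow μ ht hR.le, hint,
    mul_rpow_of_ne_top ofReal_ne_top hVt, mul_rpow_of_ne_top ofReal_ne_top hVt,
    ofReal_rpow_of_pos (by positivity), ofReal_rpow_of_pos (by positivity)]
  calc _ = ENNReal.ofReal ((R ^ n) ^ (1 / q - 1 / p) * ((R ^ n) ^ c / c) ^ (1 / p)) *
        μ (ball (0 : E) 1) ^ (1 / q - 1 / p + 1 / p) := by
        rw [ENNReal.rpow_add _ _ hV0 hVt, ENNReal.ofReal_mul (by positivity)]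
        ring
    _ = _ := by rw [hreal _ (by positivity), mul_comm]; ring_nf

end HaarMeasure

/-- the Morrey norm of `f(x) = |x|^{-d/q}` is finite and equals
`(C_d/d)^{1/q}(1-p/q)^{-1/p}`, where `C_d/d = |B(0,1)|`. -/
theorem morreyNorm_powerFunction (d : ℕ) (p q : ℝ) (hp : 1 ≤ p) (hpq : p < q)
    (hd : 1 ≤ d) :
    morreyNorm d p q (fun x => ‖x‖ ^ (-(d : ℝ) / q)) =
      (volume (ball (0 : EuclideanSpace ℝ (Fin d)) 1)) ^ (1 / q) *
        ENNReal.ofReal ((1 - p / q) ^ (-(1 : ℝ) / p)) ∧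
    morreyNorm d p q (fun x => ‖x‖ ^ (-(d : ℝ) / q)) ≠ ⊤ := by
  have : Nontrivial (EuclideanSpace ℝ (Fin d)) := by
    apply Module.nontrivial_of_finrank_pos (R := ℝ)
    rwa [finrank_euclideanSpace_fin]
  have hp0 : 0 < p := one_pos.trans_le hp
  have hq0 : 0 < q := hp0.trans hpq
  have hcenter (R : ℝ) (hR : 0 < R) :
      morreyQuotient volume p q (fun x : EuclideanSpace ℝ (Fin d) => ‖x‖ ^ (-(d : ℝ) / q)) 0 R =
        volume (ball (0 : EuclideanSpace ℝ (Fin d)) 1) ^ (1 / q) *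
          ENNReal.ofReal ((1 - p / q) ^ (-(1 : ℝ) / p)) := by
    simpa only [finrank_euclideanSpace_fin] using
      morreyQuotient_norm_rpow_ball_zero (E := EuclideanSpace ℝ (Fin d)) volume hp0 hpq hR
  have hnorm : morreyNorm d p q (fun x => ‖x‖ ^ (-(d : ℝ) / q)) =
      volume (ball (0 : EuclideanSpace ℝ (Fin d)) 1) ^ (1 / q) *
        ENNReal.ofReal ((1 - p / q) ^ (-(1 : ℝ) / p)) := by
    rw [morreyNorm_eq_iSup_morreyQuotient]
    refine le_antisymm (iSup₂_le fun a R ↦ iSup_le fun hR ↦ ?_)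
      (le_iSup₂_of_le 0 1 (le_iSup_of_le one_pos (hcenter 1 one_pos).ge))
    rw [← hcenter R hR]
    exact morreyQuotient_norm_rpow_le_ball_zero volume hp0.le
      (div_nonpos_of_nonpos_of_nonneg (by simp) hq0.le) a hR
  refine ⟨hnorm, hnorm ▸ mul_ne_top ?_ ofReal_ne_top⟩
  exact rpow_ne_top_of_nonneg (one_div_nonneg.2 hq0.le) measure_ball_lt_top.ne
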